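/- Super-duality for the type-A DAHA-superpolynomials colored by the (self-transpose) weight omega_1: in Z[q^{±1}, t^{±1}, a^{±1}] one has (i) HDA32w1(q, t, a) = q*t * HDA32w1(t^{-1}, q^{-1}, a); (ii) HDA52w1(q, t, a) = q^2*t^2 * HDA52w1(t^{-1}, q^{-1}, a); (iii) HDA43w1(q, t, a) = q^3*t^3 * HDA43w1(t^{-1}, q^{-1}, a), where HDA(t^{-1}, q^{-1}, a) denotes the substitution q -> t^{-1}, t -> q^{-1} into HDA(q,t,a), and the prefactor q^A*t^A is the greatest q,t-monomial of a-degree 0 in each superpolynomial. -/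
import Mathlib

open LaurentPolynomial

/-- The type-A DAHA-superpolynomial of the (3,2) torus knot colored by ω₁. -/
def HDA32w1 {R : Type*} [CommRing R] (q t a : R) : R :=
  1 + a*q + q*t

/-- The type-A DAHA-superpolynomial of the (5,2) torus knot colored by ω₁. -/
def HDA52w1 {R : Type*} [CommRing R] (q t a : R) : R :=
  1 + q*t + q^2*t^2 + a*(q + q^2*t)

/-- The type-A DAHA-superpolynomial of the (4,3) torus knot colored by ω₁. -/
def HDA43w1 {R : Type*} [CommRing R] (q t a : R) : R :=
  1 + a^2*q^3 + q*t + q^2*t + q^2*t^2 + q^3*t^3 + a*(q + q^2 + q^2*t + q^3*t + q^3*t^2)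

/-- The Laurent polynomial ring ℤ[q^{±1}, t^{±1}, a^{±1}]: `q` is the innermost variable,
`t` the middle one, `a` the outermost. -/
abbrev Rqta : Type := LaurentPolynomial (LaurentPolynomial (LaurentPolynomial ℤ))

/-- The variable q in ℤ[q^{±1}, t^{±1}, a^{±1}]. -/
noncomputable def qv : Rqta := C (C (T 1))
/-- The variable t in ℤ[q^{±1}, t^{±1}, a^{±1}]. -/
noncomputable def tv : Rqta := C (T 1)
/-- The variable a in ℤ[q^{±1}, t^{±1}, a^{±1}]. -/
noncomputable def av : Rqta := T 1
/-- The element q⁻¹ in ℤ[q^{±1}, t^{±1}, a^{±1}]. -/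
noncomputable def qiv : Rqta := C (C (T (-1)))
/-- The element t⁻¹ in ℤ[q^{±1}, t^{±1}, a^{±1}]. -/
noncomputable def tiv : Rqta := C (T (-1))

lemma hq : qv * qiv = 1 := by
  rw [qv, qiv, ← map_mul, ← map_mul, ← T_add]
  norm_num

lemma ht : tv * tiv = 1 := by
  rw [tv, tiv, ← map_mul, ← T_add]
  norm_num

/-- Super-duality for the type-A DAHA-superpolynomials colored by the self-transpose
weight ω₁, in the Laurent polynomial ring ℤ[q^{±1}, t^{±1}, a^{±1}]: substituting
q ↦ t⁻¹, t ↦ q⁻¹ recovers each superpolynomial up to the prefactor qᴬ·tᴬ. -/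
theorem typeA_omega1_superduality :
    HDA32w1 qv tv av = qv*tv * HDA32w1 tiv qiv av ∧
    HDA52w1 qv tv av = qv^2*tv^2 * HDA52w1 tiv qiv av ∧
    HDA43w1 qv tv av = qv^3*tv^3 * HDA43w1 tiv qiv av := by
  refine ⟨?_, ?_, ?_⟩ <;> simp only [HDA32w1, HDA52w1, HDA43w1]
  · linear_combination (-1*tv*tiv)*hq + (-1 + -1*qv*av)*ht
  · linear_combination (-1*tv^2*tiv^2 + -1*qv*tv^2*tiv + -1*qv*tv^2*qiv*tiv^2 + -1*qv*tv^2*av*tiv^2)*hq + (-1 + -1*tv*tiv + -1*qv*av + -1*qv*tv + -1*qv*tv*av*tiv + -1*qv^2*tv*av)*ht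
  · linear_combination (-1*tv^3*tiv^3 + -1*qv*tv^3*tiv^2 + -1*qv*tv^3*qiv*tiv^3 + -1*qv*tv^3*av*tiv^3 + -1*qv^2*tv^3*tiv + -1*qv^2*tv^3*tiv^2 + -1*qv^2*tv^3*qiv*tiv^2 + -1*qv^2*tv^3*qiv^2*tiv^3 + -1*qv^2*tv^3*av*tiv^2 + -1*qv^2*tv^3*av*tiv^3 + -1*qv^2*tv^3*av*qiv*tiv^3)*hq + (-1 + -1*tv*tiv + -1*tv^2*tiv^2 + -1*qv*av + -1*qv*tv + -1*qv*tv*av*tiv + -1*qv*tv^2*tiv + -1*qv*tv^2*av*tiv^2 + -1*qv^2*av + -1*qv^2*tv + -1*qv^2*tv*av + -1*qv^2*tv*av*tiv + -1*qv^2*tv^2 + -1*qv^2*tv^2*tiv + -1*qv^2*tv^2*av*tiv + -1*qv^2*tv^2*av*tiv^2 + -1*qv^3*av^2 + -1*qv^3*tv*av + -1*qv^3*tv*av^2*tiv + -1*qv^3*tv^2*av + -1*qv^3*tv^2*av*tiv + -1*qv^3*tv^2*av^2*tiv^2)*ht
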